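/- Let m be a positive integer and G a CDF on ℝ with finite mean. Then the quantile function of the Hoeffding transform H_m(G) is I_m(G^{-1}): for every j ∈ {1, …, m} and every u ∈ ((j−1)/m, j/m], (H_m(G))^{-1}(u) = μ_{j:m}(G) = ∫₀¹ G^{-1}(t) f_{B_{j:m}}(t) dt. In particular, the sequence j ↦ μ_{j:m}(G) is nondecreasing. -/

import Mathlib

open MeasureTheory Filter Set
open scoped BoundedContinuousFunction ProbabilityTheory

noncomputable section

/-- Density of the Beta(j, m-j+1) distribution. -/
def betaDens (m j : ℕ) (u : ℝ) : ℝ :=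
  (m : ℝ) * ((m - 1).choose (j - 1) : ℝ) * u ^ (j - 1) * (1 - u) ^ (m - j)

/-- Quantile function (left-continuous generalized inverse). -/
def quantile (G : ℝ → ℝ) (p : ℝ) : ℝ :=
  sInf {x : ℝ | p ≤ G x}

/-- `G` is a cumulative distribution function on ℝ. -/
structure IsCDF (G : ℝ → ℝ) : Prop where
  mono : Monotone G
  rightCont : ∀ x, ContinuousWithinAt G (Ici x) x
  tendsto_atBot : Tendsto G atBot (nhds 0)
  tendsto_atTop : Tendsto G atTop (nhds 1)

/-- `G` has finite mean: its quantile function is integrable on (0,1). -/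
def HasFiniteMean (G : ℝ → ℝ) : Prop :=
  IntegrableOn (fun u => quantile G u) (Ioo (0:ℝ) 1)

/-- Expected j-th order statistic from a sample of size m drawn from G. -/
def muOS (m j : ℕ) (G : ℝ → ℝ) : ℝ :=
  ∫ u in Ioo (0:ℝ) 1, quantile G u * betaDens m j u

/-- The Hoeffding CDF operator `H_m`. -/
def hoeffCDF (m : ℕ) (G : ℝ → ℝ) (x : ℝ) : ℝ :=
  (m : ℝ)⁻¹ * ∑ j ∈ Finset.Icc 1 m, if muOS m j G ≤ x then (1:ℝ) else 0

/-- The quantile-Hoeffding operator `I_m`. -/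
def quantHoeff (m : ℕ) (h : ℝ → ℝ) (u : ℝ) : ℝ :=
  ∑ j ∈ Finset.Icc 1 m,
    (∫ t in Ioo (0:ℝ) 1, h t * betaDens m j t) *
      (if u ∈ Ioc (((j : ℝ) - 1) / m) ((j : ℝ) / m) then (1:ℝ) else 0)

/-- Empirical CDF of the reals `x 0, ..., x (n-1)`. -/
def ecdf (n : ℕ) (x : ℕ → ℝ) (t : ℝ) : ℝ :=
  (n : ℝ)⁻¹ * ∑ i ∈ Finset.range n, if x i ≤ t then (1:ℝ) else 0

/-- Empirical CDF of the random sample `X 0, ..., X (n-1)`. -/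
def empCDF {Ω : Type*} (X : ℕ → Ω → ℝ) (n : ℕ) (ω : Ω) : ℝ → ℝ :=
  fun t => (n : ℝ)⁻¹ * ∑ i ∈ Finset.range n, if X i ω ≤ t then (1:ℝ) else 0

/-! The atoms `μ_{j:m}` are nondecreasing in `j`: with `p = j/m`, the difference
`f_{B_{j+1:m}} - f_{B_{j:m}}` is a nonnegative multiple of `u - p` and has integral zero (it is
minus the derivative of a Bernstein polynomial vanishing at `0` and `1`), so
`μ_{j+1:m} - μ_{j:m} = ∫ (G⁻¹ u - G⁻¹ p) (f_{B_{j+1:m}} - f_{B_{j:m}}) u du ≥ 0` because `G⁻¹` is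
monotone. Hence `H_m(G)` is the CDF of the uniform distribution on the sorted atoms
`μ_{1:m} ≤ ⋯ ≤ μ_{m:m}`, whose quantile on `((j-1)/m, j/m]` is the `j`-th atom. -/

theorem IsCDF.monotoneOn_quantile {G : ℝ → ℝ} (hG : IsCDF G) :
    MonotoneOn (quantile G) (Ioo 0 1) := by
  intro p hp q hq hpq
  obtain ⟨x₀, hx₀⟩ := (hG.tendsto_atBot.eventually (eventually_lt_nhds hp.1)).exists
  obtain ⟨x₁, hx₁⟩ := (hG.tendsto_atTop.eventually (eventually_ge_nhds hq.2)).exists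
  refine csInf_le_csInf ⟨x₀, fun y hy => ?_⟩ ⟨x₁, hx₁⟩ fun x hx => hpq.trans hx
  by_contra! hyx
  exact (hG.mono hyx.le).not_gt (hx₀.trans_le hy)

theorem continuous_betaDens (m j : ℕ) : Continuous (betaDens m j) := by
  unfold betaDens
  fun_prop

theorem HasFiniteMean.integrableOn_mul_betaDens {G : ℝ → ℝ} (hG : HasFiniteMean G) (m j : ℕ) :
    IntegrableOn (fun u => quantile G u * betaDens m j u) (Ioo 0 1) :=
  hG.mul_continuousOn_of_subset (continuous_betaDens m j).continuousOn measurableSet_Ioo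
    isCompact_Icc Ioo_subset_Icc_self

theorem betaDens_eq_eval_bernsteinPolynomial (n ν : ℕ) (u : ℝ) :
    betaDens (n + 1) (ν + 1) u = (n + 1) * (bernsteinPolynomial ℝ n ν).eval u := by
  simp only [betaDens, bernsteinPolynomial, Nat.cast_add, Nat.cast_one, add_tsub_cancel_right,
    Nat.reduceSubDiff, Polynomial.eval_mul, Polynomial.eval_natCast, Polynomial.eval_pow,
    Polynomial.eval_X, Polynomial.eval_sub, Polynomial.eval_one]
  ring

theorem betaDens_succ_sub_betaDens {m j : ℕ} (hj : 1 ≤ j) (hjm : j < m) (u : ℝ) :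
    betaDens m (j + 1) u - betaDens m j u =
      m.choose j * u ^ (j - 1) * (1 - u) ^ (m - j - 1) * (m * u - j) := by
  obtain ⟨a, rfl⟩ : ∃ a, j = a + 1 := ⟨j - 1, by omega⟩
  obtain ⟨c, rfl⟩ : ∃ c, m = a + c + 2 := ⟨m - a - 2, by omega⟩
  have h₁ : ((a : ℝ) + c + 2) * (a + c + 1).choose a = (a + c + 2).choose (a + 1) * (a + 1) := by
    exact_mod_cast Nat.add_one_mul_choose_eq (a + c + 1) a
  have h₂ : ((a + c + 1).choose (a + 1) : ℝ) * (a + c + 2) = (a + c + 2).choose (a + 1) * (c + 1) := by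
    have := Nat.choose_mul_succ_eq (a + c + 1) (a + 1)
    rw [show a + c + 1 + 1 - (a + 1) = c + 1 by omega] at this
    exact_mod_cast this
  simp only [betaDens, show a + c + 2 - 1 = a + c + 1 by omega, show a + 1 + 1 - 1 = a + 1 by omega,
    show a + c + 2 - (a + 1 + 1) = c by omega, show a + 1 - 1 = a by omega,
    show a + c + 2 - (a + 1) = c + 1 by omega]
  push_cast
  linear_combination (u ^ a * u * (1 - u) ^ c) * h₂ - (u ^ a * (1 - u) ^ c * (1 - u)) * h₁

theorem integral_betaDens_succ_sub_betaDens {m j : ℕ} (hj : 1 ≤ j) (hjm : j < m) :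
    ∫ u in Ioo (0 : ℝ) 1, (betaDens m (j + 1) u - betaDens m j u) = 0 := by
  obtain ⟨n, rfl⟩ : ∃ n, m = n + 1 := ⟨m - 1, by omega⟩
  obtain ⟨ν, rfl⟩ : ∃ ν, j = ν + 1 := ⟨j - 1, by omega⟩
  set B := bernsteinPolynomial ℝ (n + 1) (ν + 1)
  have hB : ∀ u, betaDens (n + 1) (ν + 1 + 1) u - betaDens (n + 1) (ν + 1) u =
      -(Polynomial.derivative B).eval u := by
    intro u
    simp only [B, betaDens_eq_eval_bernsteinPolynomial, bernsteinPolynomial.derivative_succ_aux,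
      Polynomial.eval_mul, Polynomial.eval_add, Polynomial.eval_natCast, Polynomial.eval_one,
      Polynomial.eval_sub]
    ring
  simp_rw [hB, integral_neg, ← integral_Ioc_eq_integral_Ioo,
    ← intervalIntegral.integral_of_le zero_le_one]
  rw [intervalIntegral.integral_eq_sub_of_hasDerivAt (fun x _ => B.hasDerivAt x)
    (B.derivative.continuous.intervalIntegrable 0 1)]
  simp only [B, bernsteinPolynomial.eval_at_0, bernsteinPolynomial.eval_at_1,
    if_neg (show ν + 1 ≠ n + 1 by omega), if_neg (Nat.succ_ne_zero ν), sub_zero, neg_zero]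

theorem setIntegral_mul_nonneg_of_forall_sub_mul_nonneg {α : Type*} [MeasurableSpace α]
    {μ : Measure α} {s : Set α} {f g : α → ℝ} (c : ℝ) (hs : MeasurableSet s)
    (hfg : IntegrableOn (fun x => f x * g x) s μ) (hg : IntegrableOn g s μ)
    (hg₀ : ∫ x in s, g x ∂μ = 0) (h : ∀ x ∈ s, 0 ≤ (f x - c) * g x) :
    0 ≤ ∫ x in s, f x * g x ∂μ := by
  have hc : ∫ x in s, f x * g x ∂μ = ∫ x in s, (f x - c) * g x ∂μ := by
    simp_rw [sub_mul, integral_sub hfg (hg.const_mul c), integral_const_mul, hg₀, mul_zero,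
      sub_zero]
  exact hc ▸ setIntegral_nonneg hs h

theorem muOS_le_muOS_succ {G : ℝ → ℝ} (hG : IsCDF G) (hGmean : HasFiniteMean G) {m j : ℕ}
    (hj : 1 ≤ j) (hjm : j < m) : muOS m j G ≤ muOS m (j + 1) G := by
  have hm : (0 : ℝ) < m := Nat.cast_pos.2 (by omega)
  set p : ℝ := j / m
  have hp : p ∈ Ioo (0 : ℝ) 1 :=
    ⟨by positivity, (div_lt_one hm).2 (by exact_mod_cast hjm)⟩
  have hsign : ∀ u ∈ Ioo (0 : ℝ) 1,
      0 ≤ (quantile G u - quantile G p) * (betaDens m (j + 1) u - betaDens m j u) := by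
    intro u hu
    have hK : 0 ≤ (m.choose j : ℝ) * u ^ (j - 1) * (1 - u) ^ (m - j - 1) :=
      mul_nonneg (mul_nonneg (Nat.cast_nonneg _) (pow_nonneg hu.1.le _))
        (pow_nonneg (sub_nonneg.2 hu.2.le) _)
    have hmu : (m : ℝ) * u - j = m * (u - p) := by rw [mul_sub, mul_div_cancel₀ _ hm.ne']
    rw [betaDens_succ_sub_betaDens hj hjm, hmu]
    rcases le_total u p with hup | hpu
    · exact mul_nonneg_of_nonpos_of_nonpos (sub_nonpos.2 (hG.monotoneOn_quantile hu hp hup))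
        (mul_nonpos_of_nonneg_of_nonpos hK (mul_nonpos_of_nonneg_of_nonpos hm.le (by linarith)))
    · exact mul_nonneg (sub_nonneg.2 (hG.monotoneOn_quantile hp hu hpu))
        (mul_nonneg hK (mul_nonneg hm.le (by linarith)))
  have hQ := hGmean.integrableOn_mul_betaDens m
  have hint := setIntegral_mul_nonneg_of_forall_sub_mul_nonneg (quantile G p) measurableSet_Ioo
    (((hQ (j + 1)).sub (hQ j)).congr_fun (fun u _ => (mul_sub _ _ _).symm) measurableSet_Ioo)
    (((continuous_betaDens m (j + 1)).sub (continuous_betaDens m j)).integrableOn_Icc.mono_set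
      Ioo_subset_Icc_self)
    (integral_betaDens_succ_sub_betaDens hj hjm) hsign
  simp_rw [mul_sub] at hint
  rwa [integral_sub (hQ (j + 1)) (hQ j), sub_nonneg] at hint

theorem monotoneOn_muOS {G : ℝ → ℝ} (hG : IsCDF G) (hGmean : HasFiniteMean G) (m : ℕ) :
    MonotoneOn (fun j => muOS m j G) (Icc 1 m) :=
  monotoneOn_of_le_succ ordConnected_Icc fun _ _ hj hj' =>
    muOS_le_muOS_succ hG hGmean hj.1 (Nat.succ_le_iff.1 hj'.2)

theorem quantile_uniform_of_monotoneOn {m : ℕ} {a : ℕ → ℝ} (ha : MonotoneOn a (Icc 1 m))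
    {j : ℕ} (hj : 1 ≤ j) (hjm : j ≤ m) {u : ℝ} (hu₁ : ((j : ℝ) - 1) / m < u)
    (hu₂ : u ≤ (j : ℝ) / m) :
    quantile (fun x => (m : ℝ)⁻¹ * ∑ i ∈ Finset.Icc 1 m, if a i ≤ x then (1 : ℝ) else 0) u =
      a j := by
  classical
  have hF : ∀ x, (m : ℝ)⁻¹ * ∑ i ∈ Finset.Icc 1 m, (if a i ≤ x then (1 : ℝ) else 0) =
      ((Finset.Icc 1 m).filter (a · ≤ x)).card / m := by
    intro x
    rw [Finset.sum_boole, inv_mul_eq_div]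
  refine IsLeast.csInf_eq ⟨?_, fun x (hx : u ≤ _) => ?_⟩
  · have hcount : Finset.Icc 1 j ⊆ (Finset.Icc 1 m).filter (a · ≤ a j) := fun i hi => by
      simp only [Finset.mem_Icc] at hi
      exact Finset.mem_filter.2 ⟨Finset.mem_Icc.2 ⟨hi.1, hi.2.trans hjm⟩,
        ha ⟨hi.1, hi.2.trans hjm⟩ ⟨hj, hjm⟩ hi.2⟩
    have hcard := Finset.card_le_card hcount
    rw [Nat.card_Icc, Nat.add_sub_cancel] at hcard
    simp only [hF]
    exact hu₂.trans (div_le_div_of_nonneg_right (by exact_mod_cast hcard) (Nat.cast_nonneg m))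
  · by_contra! hxj
    have hcount : (Finset.Icc 1 m).filter (a · ≤ x) ⊆ Finset.Icc 1 (j - 1) := fun i hi => by
      simp only [Finset.mem_filter, Finset.mem_Icc] at hi
      refine Finset.mem_Icc.2 ⟨hi.1.1, Nat.le_sub_one_of_lt (lt_of_not_ge fun hji => ?_)⟩
      exact (hi.2.trans_lt hxj).not_ge (ha ⟨hj, hjm⟩ hi.1 hji)
    have hcard := Finset.card_le_card hcount
    rw [Nat.card_Icc, Nat.add_sub_cancel] at hcard
    have hle : (((Finset.Icc 1 m).filter (a · ≤ x)).card : ℝ) ≤ j - 1 := by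
      rw [le_sub_iff_add_le]
      exact_mod_cast (by omega : ((Finset.Icc 1 m).filter (a · ≤ x)).card + 1 ≤ j)
    simp only [hF] at hx
    exact hu₁.not_ge (hx.trans (div_le_div_of_nonneg_right hle (Nat.cast_nonneg m)))

theorem quantile_hoeffCDF_general
    (m : ℕ) (G : ℝ → ℝ) (hG : IsCDF G) (hGmean : HasFiniteMean G) :
    (∀ j : ℕ, 1 ≤ j → j ≤ m → ∀ u : ℝ,
      ((j : ℝ) - 1) / m < u → u ≤ (j : ℝ) / m →
        quantile (hoeffCDF m G) u = muOS m j G) ∧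
    (∀ j k : ℕ, 1 ≤ j → j ≤ k → k ≤ m → muOS m j G ≤ muOS m k G) :=
  ⟨fun _ hj hjm _ hu₁ hu₂ =>
    quantile_uniform_of_monotoneOn (monotoneOn_muOS hG hGmean m) hj hjm hu₁ hu₂,
  fun _ _ hj hjk hkm =>
    monotoneOn_muOS hG hGmean m ⟨hj, hjk.trans hkm⟩ ⟨hj.trans hjk, hkm⟩ hjk⟩

/-- The quantile function of `H_m(G)` is the step function `I_m(G^{-1})`: on each
interval `((j−1)/m, j/m]` it equals `μ_{j:m}(G)`; in particular `j ↦ μ_{j:m}(G)`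
is nondecreasing. -/
theorem quantile_hoeffCDF
    (m : ℕ) (hm : 0 < m) (G : ℝ → ℝ) (hG : IsCDF G) (hGmean : HasFiniteMean G) :
    (∀ j : ℕ, 1 ≤ j → j ≤ m → ∀ u : ℝ,
      ((j : ℝ) - 1) / m < u → u ≤ (j : ℝ) / m →
        quantile (hoeffCDF m G) u = muOS m j G) ∧
    (∀ j k : ℕ, 1 ≤ j → j ≤ k → k ≤ m → muOS m j G ≤ muOS m k G) :=
  quantile_hoeffCDF_general m G hG hGmean
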